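/- arXiv:1110.2681 — 2 statements merged into one kernel-verified Lean document; each statement's English description precedes it below -/
import Mathlib

section
/- Let α ∈ [0,1], let {ξ_i}_{i∈I} ⊆ ℝ^d and r > 0, and let {ψ_i}_{i∈I} ⊆ C_c^∞(ℝ^d) satisfy supp ψ_i ⊆ B(ξ_i, r⟨ξ_i⟩^α) and, for every multiindex β, sup_i ⟨ξ_i⟩^{α|β|} ‖∂^β ψ_i‖_{L^∞} ≤ C_β < ∞. Then for each p ∈ [1,∞] there is a constant C_p such that sup_i ⟨ξ_i⟩^{-dα/p'} ‖F ψ_i‖_{L^p} ≤ C_p, where F denotes the Fourier transform and 1/p + 1/p' = 1. -/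
set_option maxHeartbeats 1000000


open MeasureTheory ENNReal FourierTransform

/-- Japanese bracket ⟨x⟩ = (1+|x|²)^(1/2). -/
noncomputable def jb {d : ℕ} (x : EuclideanSpace ℝ (Fin d)) : ℝ :=
  (1 + ‖x‖ ^ 2) ^ ((1 : ℝ) / 2)

open Real in
lemma jb_one_le {d : ℕ} (x : EuclideanSpace ℝ (Fin d)) : 1 ≤ jb x := by
  rw [jb]
  have : (1:ℝ) ≤ 1 + ‖x‖^2 := le_add_of_nonneg_right (sq_nonneg _)
  exact Real.one_le_rpow this (by norm_num)

open Real in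
/-- Decay of the Fourier transform of a compactly supported smooth function. -/
lemma aux_decay {d : ℕ} (f : EuclideanSpace ℝ (Fin d) → ℂ)
    (hf : ContDiff ℝ (⊤ : ℕ∞) f) (hc : HasCompactSupport f) (n : ℕ) (w : EuclideanSpace ℝ (Fin d)) :
    ‖w‖ ^ n * ‖𝓕 f w‖ ≤ ∫ v, ‖iteratedFDeriv ℝ n f v‖ := by
  have hint : ∀ m : ℕ, Integrable (iteratedFDeriv ℝ m f) volume := fun m ↦
    (ContDiff.continuous_iteratedFDeriv (by exact_mod_cast le_top) hf).integrable_of_hasCompactSupport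
      (hc.iteratedFDeriv m)
  have hnn : 0 ≤ ∫ v, ‖iteratedFDeriv ℝ n f v‖ := integral_nonneg fun v ↦ norm_nonneg _
  have key := Real.fourier_iteratedFDeriv (N := (n : ℕ∞)) (hf.of_le (by exact_mod_cast le_top))
    (fun m _ ↦ hint m) (le_refl (n : ℕ∞))
  have hb : ‖𝓕 (iteratedFDeriv ℝ n f) w‖ ≤ ∫ v, ‖iteratedFDeriv ℝ n f v‖ :=
    VectorFourier.norm_fourierIntegral_le_integral_norm _ _ _ _ _
  rw [key] at hb
  have happ : ‖VectorFourier.fourierPowSMulRight (-innerSL ℝ) (𝓕 f) w n (fun _ ↦ w)‖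
      = (2 * π) ^ n * (‖w‖ ^ n * ‖w‖ ^ n) * ‖𝓕 f w‖ := by
    rw [VectorFourier.fourierPowSMulRight_apply]
    simp only [ContinuousLinearMap.neg_apply, innerSL_apply_apply, real_inner_self_eq_norm_sq]
    rw [norm_smul, norm_smul]
    rw [Finset.prod_const]
    simp only [Finset.card_fin, norm_pow, Real.norm_eq_abs]
    have h2 : ‖(-(2 * ↑π * Complex.I))‖ = 2 * π := by
      simp [abs_of_nonneg Real.pi_nonneg]
    have habs : |(-‖w‖ ^ 2)| ^ n = ‖w‖ ^ n * ‖w‖ ^ n := by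
      rw [abs_neg, abs_of_nonneg (by positivity)]
      rw [← pow_mul, two_mul, pow_add]
    have hin : (innerSL ℝ) w w = ‖w‖ ^ 2 := real_inner_self_eq_norm_sq w
    rw [hin]
    rw [h2, habs]
    ring
  have hle : ‖VectorFourier.fourierPowSMulRight (-innerSL ℝ) (𝓕 f) w n (fun _ ↦ w)‖
      ≤ (∫ v, ‖iteratedFDeriv ℝ n f v‖) * ‖w‖ ^ n := by
    refine le_trans (ContinuousMultilinearMap.le_opNorm _ _) ?_
    rw [Finset.prod_const, Finset.card_fin]
    exact mul_le_mul_of_nonneg_right hb (by positivity)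
  rw [happ] at hle
  have h2pi : (1:ℝ) ≤ (2 * π) ^ n := one_le_pow₀ (by nlinarith [Real.pi_gt_three])
  rcases eq_or_ne (‖w‖) 0 with hw | hw
  · rcases Nat.eq_zero_or_pos n with rfl | hn
    · simpa using hle
    · rw [hw, zero_pow (by omega), zero_mul]
      exact hnn
  · have hwpos : 0 < ‖w‖ ^ n := pow_pos (lt_of_le_of_ne (norm_nonneg w) (Ne.symm hw)) n
    have h1 : ‖w‖ ^ n * (‖w‖ ^ n * ‖𝓕 f w‖) ≤ ‖w‖ ^ n * (∫ v, ‖iteratedFDeriv ℝ n f v‖) := by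
      nlinarith [mul_nonneg (sub_nonneg.mpr h2pi)
        (mul_nonneg (mul_nonneg hwpos.le hwpos.le) (norm_nonneg (𝓕 f w)))]
    exact le_of_mul_le_mul_left h1 hwpos

/-- Integral of the norm of a function supported in a ball. -/
lemma aux_int_ball {d : ℕ} {F : Type*} [NormedAddCommGroup F]
    (g : EuclideanSpace ℝ (Fin d) → F) {a : EuclideanSpace ℝ (Fin d)} {R B : ℝ}
    (hsupp : tsupport g ⊆ Metric.closedBall a R) (hB : ∀ x, ‖g x‖ ≤ B) :
    ∫ v, ‖g v‖ ≤ B * (volume (Metric.closedBall a R)).toReal := by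
  have h0 : ∀ x ∉ Metric.closedBall a R, ‖g x‖ = 0 := fun x hx ↦ by
    rw [image_eq_zero_of_notMem_tsupport (fun h ↦ hx (hsupp h)), norm_zero]
  rw [← setIntegral_eq_integral_of_forall_compl_eq_zero h0]
  refine le_trans (le_abs_self _) ?_
  rw [← Real.norm_eq_abs]
  refine norm_setIntegral_le_of_norm_le_const_ae measure_closedBall_lt_top ?_
  filter_upwards with x
  rw [Real.norm_eq_abs, abs_of_nonneg (norm_nonneg _)]
  exact hB x

/-- If ψ_i ∈ C_c^∞ with supp ψ_i ⊆ B(ξ_i, r⟨ξ_i⟩^α) and uniform scaled derivative bounds,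
then for p ∈ [1,∞] one has sup_i ⟨ξ_i⟩^{-dα/p'} ‖𝓕 ψ_i‖_{L^p} ≤ C_p < ∞. -/
theorem stmt5 {d : ℕ} {I : Type*} (α r : ℝ) (hα0 : 0 ≤ α) (hα1 : α ≤ 1) (hr : 0 < r)
    (ξ : I → EuclideanSpace ℝ (Fin d)) (ψ : I → EuclideanSpace ℝ (Fin d) → ℂ)
    (hsm : ∀ i, ContDiff ℝ (⊤ : ℕ∞) (ψ i)) (hcs : ∀ i, HasCompactSupport (ψ i))
    (hsupp : ∀ i, tsupport (ψ i) ⊆ Metric.closedBall (ξ i) (r * jb (ξ i) ^ α))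
    (hder : ∀ n : ℕ, ∃ Cβ : ℝ, ∀ i x, jb (ξ i) ^ (α * n) * ‖iteratedFDeriv ℝ n (ψ i) x‖ ≤ Cβ)
    (p p' : ℝ≥0∞) (hp : 1 ≤ p) (hpp : 1/p + 1/p' = 1) :
    ∃ Cp : ℝ, 0 < Cp ∧ ∀ i,
      ENNReal.ofReal (jb (ξ i) ^ (-((d : ℝ) * α * (1/p').toReal))) *
        eLpNorm (𝓕 (ψ i)) p volume ≤ ENNReal.ofReal Cp := by
  obtain ⟨C₀, hC₀⟩ := hder 0
  obtain ⟨C₁, hC₁⟩ := hder (d+1)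
  set c_d : ℝ := (volume (Metric.ball (0:EuclideanSpace ℝ (Fin d)) 1)).toReal with hc_d
  have hc_d0 : 0 ≤ c_d := ENNReal.toReal_nonneg
  set K : ℝ := ∫ y : EuclideanSpace ℝ (Fin d), (1+‖y‖) ^ (-((d:ℝ)+1)) with hKdef
  set A : ℝ := 2^(d+1) * (max C₀ 0 + max C₁ 0) with hA
  have hA0 : 0 ≤ A := by
    rw [hA]; positivity
  have hM1 : (1:ℝ) ≤ max 1 K := le_max_left _ _
  have hX0 : 0 ≤ A * r^d * c_d :=
    mul_nonneg (mul_nonneg hA0 (pow_nonneg hr.le d)) hc_d0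
  refine ⟨1 + A * r^d * c_d * max 1 K, by nlinarith, fun i ↦ ?_⟩
  set j : ℝ := jb (ξ i) with hj
  have hj1 : 1 ≤ j := jb_one_le _
  have hj0 : (0:ℝ) < j := lt_of_lt_of_le one_pos hj1
  set c : ℝ := j ^ α with hc
  have hc1 : 1 ≤ c := Real.one_le_rpow hj1 hα0
  have hc0 : (0:ℝ) < c := lt_of_lt_of_le one_pos hc1
  set R : ℝ := r * c with hR
  have hR0 : 0 < R := mul_pos hr hc0
  set S := Metric.closedBall (ξ i) R with hS
  set Vb : ℝ := (volume S).toReal with hVbdef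
  have hVb0 : 0 ≤ Vb := ENNReal.toReal_nonneg
  have hcd2 : c ^ d = j ^ (α * (d:ℝ)) := by
    rw [hc, ← Real.rpow_natCast (j ^ α) d, ← Real.rpow_mul hj0.le]
  have hVbeq : Vb = r^d * c^d * c_d := by
    rw [hVbdef, hS, MeasureTheory.Measure.addHaar_closedBall _ _ hR0.le,
      finrank_euclideanSpace_fin, ENNReal.toReal_mul, ENNReal.toReal_ofReal (by positivity),
      ← hc_d, hR, mul_pow]
  have hsupp' : tsupport (ψ i) ⊆ S := by
    rw [hS, hR, hc, hj]; exact hsupp i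
  -- pointwise bounds
  have hψ0 : ∀ x, ‖ψ i x‖ ≤ max C₀ 0 := fun x ↦ by
    have h := hC₀ i x
    simp only [Nat.cast_zero, mul_zero, Real.rpow_zero, one_mul,
      norm_iteratedFDeriv_zero, ← hj] at h
    exact le_trans h (le_max_left _ _)
  have hF0b : ∀ x, ‖𝓕 (ψ i) x‖ ≤ max C₀ 0 * Vb := fun x ↦ by
    refine le_trans (VectorFourier.norm_fourierIntegral_le_integral_norm _ _ _ _ _) ?_
    exact aux_int_ball (ψ i) hsupp' hψ0
  have hpowj : (0:ℝ) < j ^ (α * ((d+1:ℕ):ℝ)) := Real.rpow_pos_of_pos hj0 _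
  have hFd : ∀ x, ‖x‖^(d+1) * ‖𝓕 (ψ i) x‖
      ≤ max C₁ 0 * (j ^ (α * ((d+1:ℕ):ℝ)))⁻¹ * Vb := fun x ↦ by
    refine le_trans (aux_decay (ψ i) (hsm i) (hcs i) (d+1) x) ?_
    refine aux_int_ball _ (le_trans (tsupport_iteratedFDeriv_subset _) hsupp') fun v ↦ ?_
    have h := hC₁ i v
    rw [← hj] at h
    have h2 : ‖iteratedFDeriv ℝ (d+1) (ψ i) v‖ ≤ C₁ / j ^ (α * ((d+1:ℕ):ℝ)) := by
      rw [le_div_iff₀ hpowj, mul_comm]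
      exact h
    refine le_trans h2 ?_
    rw [div_eq_mul_inv]
    exact mul_le_mul_of_nonneg_right (le_max_left _ _) (inv_nonneg.mpr hpowj.le)
  have hcancel : c ^ (d+1) * (j ^ (α * ((d+1:ℕ):ℝ)))⁻¹ = 1 := by
    rw [hc, ← Real.rpow_natCast (j ^ α) (d+1), ← Real.rpow_mul hj0.le]
    exact mul_inv_cancel₀ (ne_of_gt hpowj)
  have hpt : ∀ x, ‖𝓕 (ψ i) x‖ * (1 + c * ‖x‖)^(d+1) ≤ A * Vb := fun x ↦ by
    have ht0 : 0 ≤ c * ‖x‖ := by positivity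
    have hbin : (1 + c * ‖x‖)^(d+1) ≤ 2^(d+1) * (1 + (c * ‖x‖)^(d+1)) := by
      have h1 : 1 + c * ‖x‖ ≤ 2 * max 1 (c * ‖x‖) := by
        rcases le_total (c * ‖x‖) 1 with h | h
        · rw [max_eq_left h]; linarith
        · rw [max_eq_right h]; linarith
      refine le_trans (pow_le_pow_left₀ (by positivity) h1 (d+1)) ?_
      rw [mul_pow]
      have h2 : (max 1 (c * ‖x‖))^(d+1) ≤ 1 + (c * ‖x‖)^(d+1) := by
        rcases le_total (c * ‖x‖) 1 with h | h
        · rw [max_eq_left h, one_pow]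
          nlinarith [pow_nonneg ht0 (d+1)]
        · rw [max_eq_right h]
          nlinarith [pow_nonneg ht0 (d+1)]
      have h3 : (0:ℝ) ≤ 2^(d+1) := by positivity
      nlinarith [h2, h3]
    have hterm2 : (c * ‖x‖)^(d+1) * ‖𝓕 (ψ i) x‖ ≤ max C₁ 0 * Vb := by
      calc (c * ‖x‖)^(d+1) * ‖𝓕 (ψ i) x‖
          = c^(d+1) * (‖x‖^(d+1) * ‖𝓕 (ψ i) x‖) := by rw [mul_pow]; ring
        _ ≤ c^(d+1) * (max C₁ 0 * (j ^ (α * ((d+1:ℕ):ℝ)))⁻¹ * Vb) :=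
            mul_le_mul_of_nonneg_left (hFd x) (by positivity)
        _ = (c^(d+1) * (j ^ (α * ((d+1:ℕ):ℝ)))⁻¹) * (max C₁ 0 * Vb) := by ring
        _ = max C₁ 0 * Vb := by rw [hcancel, one_mul]
    calc ‖𝓕 (ψ i) x‖ * (1 + c * ‖x‖)^(d+1)
        ≤ ‖𝓕 (ψ i) x‖ * (2^(d+1) * (1 + (c * ‖x‖)^(d+1))) :=
          mul_le_mul_of_nonneg_left hbin (norm_nonneg _)
      _ = 2^(d+1) * (‖𝓕 (ψ i) x‖ + (c * ‖x‖)^(d+1) * ‖𝓕 (ψ i) x‖) := by ring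
      _ ≤ 2^(d+1) * (max C₀ 0 * Vb + max C₁ 0 * Vb) := by
          have := hF0b x
          have h3 : (0:ℝ) ≤ 2^(d+1) := by positivity
          nlinarith [hterm2]
      _ = A * Vb := by rw [hA]; ring
  set g : EuclideanSpace ℝ (Fin d) → ℝ := fun x ↦ A * Vb / (1 + c * ‖x‖)^(d+1) with hgdef
  have hg0 : ∀ x, 0 ≤ g x := fun x ↦ by
    simp only [hgdef]
    exact div_nonneg (mul_nonneg hA0 hVb0) (by positivity)
  have hgb : ∀ x, ‖𝓕 (ψ i) x‖ ≤ g x := fun x ↦ by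
    simp only [hgdef]
    rw [le_div_iff₀ (by positivity)]
    exact hpt x
  rcases eq_or_ne p ⊤ with rfl | htop
  · -- p = ∞
    have hp'1 : p' = 1 := by
      have h1 : p'⁻¹ = 1 := by simpa [one_div] using hpp
      exact ENNReal.inv_eq_one.mp h1
    have ht1 : (1/p').toReal = 1 := by rw [hp'1]; simp
    rw [ht1]
    have hsupr : eLpNorm (𝓕 (ψ i)) ⊤ volume ≤ ENNReal.ofReal (A * Vb) := by
      rw [eLpNorm_exponent_top]
      refine eLpNormEssSup_le_of_ae_bound (C := A * Vb) ?_
      filter_upwards with x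
      refine le_trans (hgb x) ?_
      simp only [hgdef]
      refine div_le_self (mul_nonneg hA0 hVb0) (one_le_pow₀ ?_)
      nlinarith [mul_nonneg hc0.le (norm_nonneg x)]
    have hjone : j ^ (-((d:ℝ) * α * 1)) * j ^ (α * (d:ℝ)) = 1 := by
      rw [← Real.rpow_add hj0, show -((d:ℝ) * α * 1) + α * (d:ℝ) = 0 by ring, Real.rpow_zero]
    calc ENNReal.ofReal (j ^ (-((d:ℝ) * α * 1))) * eLpNorm (𝓕 (ψ i)) ⊤ volume
        ≤ ENNReal.ofReal (j ^ (-((d:ℝ) * α * 1))) * ENNReal.ofReal (A * Vb) :=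
          mul_le_mul_right hsupr _
      _ = ENNReal.ofReal (j ^ (-((d:ℝ) * α * 1)) * (A * Vb)) :=
          (ENNReal.ofReal_mul (Real.rpow_nonneg hj0.le _)).symm
      _ ≤ ENNReal.ofReal (1 + A * r^d * c_d * max 1 K) := by
          refine ENNReal.ofReal_le_ofReal ?_
          have : j ^ (-((d:ℝ) * α * 1)) * (A * Vb) = A * r^d * c_d := by
            rw [hVbeq, hcd2]
            calc j ^ (-((d:ℝ) * α * 1)) * (A * (r ^ d * j ^ (α * (d:ℝ)) * c_d))
                = A * r^d * c_d * (j ^ (-((d:ℝ) * α * 1)) * j ^ (α * (d:ℝ))) := by ring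
              _ = A * r^d * c_d := by rw [hjone, mul_one]
          rw [this]
          nlinarith [hM1, hX0]
  · -- p finite
    have hp0 : p ≠ 0 := (lt_of_lt_of_le zero_lt_one hp).ne'
    set q := p.toReal with hq
    have hq1 : 1 ≤ q := by
      have := ENNReal.toReal_mono htop hp
      simpa using this
    have hq0 : 0 < q := lt_of_lt_of_le one_pos hq1
    have hp'formula : (1/p').toReal = 1 - q⁻¹ := by
      have h1p : (1:ℝ≥0∞)/p ≤ 1 := by
        rw [one_div]
        exact ENNReal.inv_le_one.mpr hp
      have h1pne : (1:ℝ≥0∞)/p ≠ ⊤ := ne_top_of_le_ne_top one_ne_top h1p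
      have h2 : 1/p' = 1 - 1/p := by
        rw [add_comm] at hpp
        exact ENNReal.eq_sub_of_add_eq h1pne hpp
      rw [h2, ENNReal.toReal_sub_of_le h1p one_ne_top, one_div, ENNReal.toReal_inv]
      simp [hq]
    rw [hp'formula]
    -- integrability setup
    set s : ℝ := ((d:ℝ)+1) * q with hs
    have hds : (d:ℝ) < s := by nlinarith [Nat.cast_nonneg (α := ℝ) d]
    set F0 : EuclideanSpace ℝ (Fin d) → ℝ := fun y ↦ (1+‖y‖) ^ (-s) with hF0
    have hF0int : Integrable F0 := by
      rw [hF0]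
      exact integrable_one_add_norm (by rw [finrank_euclideanSpace_fin]; exact hds)
    have hKint : Integrable (fun y : EuclideanSpace ℝ (Fin d) ↦ (1+‖y‖) ^ (-((d:ℝ)+1))) :=
      integrable_one_add_norm (by rw [finrank_euclideanSpace_fin]; linarith)
    have hF0nn : ∀ y, 0 ≤ F0 y := fun y ↦ by
      simp only [hF0]
      positivity
    have hF0K : ∫ y, F0 y ≤ K := by
      rw [hKdef]
      refine integral_mono hF0int hKint fun y ↦ ?_
      simp only [hF0]
      refine Real.rpow_le_rpow_of_exponent_le (by nlinarith [norm_nonneg y]) ?_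
      rw [hs]
      nlinarith [Nat.cast_nonneg (α := ℝ) d]
    have hgq : ∀ x, (g x) ^ q = (A*Vb)^q * F0 (c • x) := fun x ↦ by
      have h1 : (0:ℝ) ≤ 1 + c*‖x‖ := by positivity
      have hcx : (1:ℝ) + ‖c • x‖ = 1 + c * ‖x‖ := by
        rw [norm_smul, Real.norm_eq_abs, abs_of_pos hc0]
      simp only [hgdef, hF0]
      rw [hcx, Real.div_rpow (mul_nonneg hA0 hVb0) (by positivity),
        ← Real.rpow_natCast (1+c*‖x‖) (d+1), ← Real.rpow_mul h1,
        Real.rpow_neg h1, div_eq_mul_inv, ← Real.rpow_neg h1]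
      rw [← Real.rpow_neg h1]
      congr 1
      rw [hs]
      push_cast
      ring
    have hcomp : Integrable (fun x ↦ F0 (c • x)) :=
      (integrable_comp_smul_iff volume F0 hc0.ne').mpr hF0int
    have hgqint : Integrable (fun x ↦ (g x)^q) := by
      have heq : (fun x ↦ (g x)^q) = fun x ↦ (A*Vb)^q * F0 (c • x) := funext hgq
      rw [heq]
      exact hcomp.const_mul _
    have hInt : ∫ x, (g x)^q = (A*Vb)^q * ((c^d)⁻¹ * ∫ y, F0 y) := by
      calc ∫ x, (g x)^q = ∫ x, (A*Vb)^q * F0 (c • x) := by simp only [hgq]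
        _ = (A*Vb)^q * ∫ x, F0 (c • x) := integral_const_mul _ _
        _ = (A*Vb)^q * ((c^d)⁻¹ * ∫ y, F0 y) := by
            rw [MeasureTheory.Measure.integral_comp_smul volume F0 c,
              finrank_euclideanSpace_fin, abs_of_pos (by positivity), smul_eq_mul]
    have hIntnn : 0 ≤ ∫ x, (g x)^q := integral_nonneg fun x ↦ by positivity
    have hIntle : ∫ x, (g x)^q ≤ (A*Vb)^q * ((c^d)⁻¹ * max 1 K) := by
      rw [hInt]
      have hF0Knn : ∫ y, F0 y ≤ max 1 K := le_trans hF0K (le_max_right _ _)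
      have h1 : (0:ℝ) ≤ (A*Vb)^q := Real.rpow_nonneg (mul_nonneg hA0 hVb0) _
      have h2 : (0:ℝ) ≤ (c^d)⁻¹ := by positivity
      nlinarith [mul_nonneg h1 h2]
    -- eLpNorm bound
    have hnorm : eLpNorm (𝓕 (ψ i)) p volume ≤ ENNReal.ofReal ((∫ x, (g x)^q) ^ (1/q)) := by
      refine le_trans (eLpNorm_mono_real hgb) ?_
      rw [eLpNorm_eq_lintegral_rpow_enorm_toReal hp0 htop, ← hq]
      have hptw : ∀ x, ‖g x‖ₑ ^ q = ENNReal.ofReal ((g x)^q) := fun x ↦ by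
        rw [Real.enorm_eq_ofReal (hg0 x), ENNReal.ofReal_rpow_of_nonneg (hg0 x) hq0.le]
      rw [lintegral_congr hptw,
        ← ofReal_integral_eq_lintegral_ofReal hgqint
          (Filter.Eventually.of_forall fun x ↦ by positivity),
        ← ENNReal.ofReal_rpow_of_nonneg hIntnn (by positivity)]
    -- real-number computation
    have hcd2inv : ((c^d)⁻¹)^(1/q) = j ^ (-(α * (d:ℝ)) * (1/q)) := by
      rw [hcd2, ← Real.rpow_neg hj0.le, ← Real.rpow_mul hj0.le]
    obtain ⟨B, hB⟩ : ∃ B : ℝ, B = A * Vb := ⟨_, rfl⟩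
    have hB0 : 0 ≤ B := hB ▸ mul_nonneg hA0 hVb0
    rw [← hB] at hIntle
    have h3 : (∫ x, (g x)^q)^(1/q) ≤ B * (j ^ (-(α * (d:ℝ)) * (1/q)) * max 1 K) := by
      refine le_trans (Real.rpow_le_rpow hIntnn hIntle (by positivity)) ?_
      have e1 : (B^q * ((c^d)⁻¹ * max 1 K))^(1/q)
          = (B^q)^(1/q) * (((c^d)⁻¹)^(1/q) * (max 1 K)^(1/q)) := by
        rw [Real.mul_rpow (Real.rpow_nonneg hB0 _)
            (mul_nonneg (by positivity) (by positivity)),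
          Real.mul_rpow (by positivity) (by positivity)]
      have e2 : (B^q)^(1/q) = B := by
        rw [← Real.rpow_mul hB0, mul_one_div_cancel hq0.ne', Real.rpow_one]
      have e3 : (max 1 K)^(1/q) ≤ max 1 K := by
        have := Real.rpow_le_rpow_of_exponent_le hM1
          (show 1/q ≤ 1 by rw [div_le_one hq0]; exact hq1)
        rwa [Real.rpow_one] at this
      rw [e1, e2]
      refine mul_le_mul_of_nonneg_left ?_ hB0
      rw [hcd2inv]
      exact mul_le_mul_of_nonneg_left e3 (Real.rpow_nonneg hj0.le _)
    have hjpow : j ^ (-((d:ℝ) * α * (1 - q⁻¹))) *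
        (j ^ (α * (d:ℝ)) * j ^ (-(α * (d:ℝ)) * (1/q))) = 1 := by
      rw [← Real.rpow_add hj0, ← Real.rpow_add hj0,
        show -((d:ℝ) * α * (1 - q⁻¹)) + (α * (d:ℝ) + -(α * (d:ℝ)) * (1/q)) = 0 by ring,
        Real.rpow_zero]
    calc ENNReal.ofReal (j ^ (-((d:ℝ) * α * (1 - q⁻¹)))) * eLpNorm (𝓕 (ψ i)) p volume
        ≤ ENNReal.ofReal (j ^ (-((d:ℝ) * α * (1 - q⁻¹)))) *
            ENNReal.ofReal ((∫ x, (g x)^q) ^ (1/q)) := mul_le_mul_right hnorm _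
      _ = ENNReal.ofReal (j ^ (-((d:ℝ) * α * (1 - q⁻¹))) * (∫ x, (g x)^q) ^ (1/q)) :=
          (ENNReal.ofReal_mul (Real.rpow_nonneg hj0.le _)).symm
      _ ≤ ENNReal.ofReal (1 + A * r^d * c_d * max 1 K) := by
          refine ENNReal.ofReal_le_ofReal ?_
          have h4 : j ^ (-((d:ℝ) * α * (1 - q⁻¹))) * (∫ x, (g x)^q) ^ (1/q)
              ≤ j ^ (-((d:ℝ) * α * (1 - q⁻¹))) * (B * (j ^ (-(α * (d:ℝ)) * (1/q)) * max 1 K)) :=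
            mul_le_mul_of_nonneg_left h3 (Real.rpow_nonneg hj0.le _)
          refine le_trans h4 ?_
          have h5 : j ^ (-((d:ℝ) * α * (1 - q⁻¹))) * (B * (j ^ (-(α * (d:ℝ)) * (1/q)) * max 1 K))
              = A * r^d * c_d * max 1 K *
                (j ^ (-((d:ℝ) * α * (1 - q⁻¹))) *
                  (j ^ (α * (d:ℝ)) * j ^ (-(α * (d:ℝ)) * (1/q)))) := by
            rw [hB, hVbeq, hcd2]; ring
          rw [h5, hjpow, mul_one]
          linarith
end

section
/- Let 0 ≤ α₁ ≤ α₂ ≤ 1 and let {Q_j}_{j∈J} and {P_i}_{i∈I} be families of measurable subsets of ℝ^d, each an admissible covering (union equal to ℝ^d, each member intersecting at most n₀ others) such that there exist constants κ ≥ 1, K ≥ 1 with: κ^{-1}⟨x⟩^{α₁ d} ≤ μ(Q_j) ≤ κ⟨x⟩^{α₁ d} for all x ∈ Q_j, κ^{-1}⟨x⟩^{α₂ d} ≤ μ(P_i) ≤ κ⟨x⟩^{α₂ d} for all x ∈ P_i, and each Q_j (resp. P_i) contains a ball of radius r and is contained in a ball of radius R with R/r ≤ K. Fix η_j ∈ Q_j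 and ξ_i ∈ P_i. Then for Λ_j = {i ∈ I : Q_j ∩ P_i ≠ ∅}, there is a constant c such that |Λ_j| ≤ c for all j ∈ J, and moreover ⟨ξ_i⟩ ≍ ⟨η_j⟩ whenever Q_j ∩ P_i ≠ ∅. -/
open MeasureTheory

/-!
A cell `S` of an `α`-covering containing `y` has volume at most `κ ⟨y⟩ ^ (α d)`, so the ball it
contains has radius `≲ ⟨y⟩ ^ α`, and by roundness `S` lies within `L ⟨y⟩ ^ α ≤ L ⟨y⟩` of `y`.
Hence `⟨·⟩` varies by a factor at most `1 + L` on each cell, and chaining through a common point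
gives `⟨ξ i⟩ ≍ ⟨η j⟩`. Since `α₁ ≤ α₂`, every `P i` meeting `Q j` then lies in a ball of radius
`≍ ⟨η j⟩ ^ α₂` around `η j` and has volume `≳ ⟨η j⟩ ^ (α₂ d)`; as the `P i` overlap at most `n₀`
times, only boundedly many of them fit.
-/

open Metric
open scoped ENNReal

section JapaneseBracket

variable {d : ℕ}

lemma jb_eq_sqrt (x : EuclideanSpace ℝ (Fin d)) : jb x = √(1 + ‖x‖ ^ 2) :=
  (Real.sqrt_eq_rpow _).symm

lemma jb_sq (x : EuclideanSpace ℝ (Fin d)) : jb x ^ 2 = 1 + ‖x‖ ^ 2 := by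
  rw [jb_eq_sqrt, Real.sq_sqrt (by positivity)]

lemma one_le_jb (x : EuclideanSpace ℝ (Fin d)) : 1 ≤ jb x := by
  rw [jb_eq_sqrt, Real.one_le_sqrt]
  nlinarith [sq_nonneg ‖x‖]

lemma jb_pos (x : EuclideanSpace ℝ (Fin d)) : 0 < jb x :=
  one_pos.trans_le (one_le_jb x)

lemma norm_le_jb (x : EuclideanSpace ℝ (Fin d)) : ‖x‖ ≤ jb x := by
  rw [jb_eq_sqrt, Real.le_sqrt (norm_nonneg x) (by positivity)]
  linarith

lemma jb_le_jb_add_dist (x y : EuclideanSpace ℝ (Fin d)) : jb x ≤ jb y + dist x y := by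
  have hxy : ‖x‖ ≤ ‖y‖ + dist x y := norm_le_norm_add_const_of_dist_le le_rfl
  have hy := norm_le_jb y
  have hd := dist_nonneg (x := x) (y := y)
  rw [← pow_le_pow_iff_left₀ (jb_pos x).le (by linarith [jb_pos y]) two_ne_zero, jb_sq, add_sq,
    jb_sq]
  nlinarith [norm_nonneg x]

lemma jb_le_of_dist_le {x y : EuclideanSpace ℝ (Fin d)} {L α : ℝ} (hL : 0 ≤ L) (hα : α ≤ 1)
    (h : dist x y ≤ L * jb y ^ α) : jb x ≤ (1 + L) * jb y := by
  have : jb y ^ α ≤ jb y :=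
    (Real.rpow_le_rpow_of_exponent_le (one_le_jb y) hα).trans_eq (Real.rpow_one _)
  nlinarith [jb_le_jb_add_dist x y]

end JapaneseBracket

lemma Real.rpow_le_mul_rpow_of_le_mul {a b C β : ℝ} (ha : 0 ≤ a) (hb : 0 ≤ b) (hC : 1 ≤ C)
    (hβ₀ : 0 ≤ β) (hβ₁ : β ≤ 1) (h : a ≤ C * b) : a ^ β ≤ C * b ^ β :=
  calc a ^ β ≤ (C * b) ^ β := Real.rpow_le_rpow ha h hβ₀
    _ = C ^ β * b ^ β := Real.mul_rpow (by linarith) hb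
    _ ≤ C * b ^ β := by
      gcongr
      exact (Real.rpow_le_rpow_of_exponent_le hC hβ₁).trans_eq (Real.rpow_one C)

lemma Real.rpow_le_mul_of_inv_mul_rpow_le {a b C κ γ v : ℝ} (ha : 0 ≤ a) (hb : 0 ≤ b)
    (hC : 0 ≤ C) (hκ : 0 < κ) (hγ : 0 ≤ γ) (hab : a ≤ C * b) (hv : κ⁻¹ * b ^ γ ≤ v) :
    a ^ γ ≤ κ * C ^ γ * v :=
  calc a ^ γ ≤ (C * b) ^ γ := Real.rpow_le_rpow ha hab hγ
    _ = κ * C ^ γ * (κ⁻¹ * b ^ γ) := by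
      rw [Real.mul_rpow hC hb]
      field_simp
    _ ≤ κ * C ^ γ * v := by gcongr

lemma Set.encard_le_of_forall_finset_card_le {ι : Type*} {s : Set ι} {c : ℕ}
    (h : ∀ t : Finset ι, ↑t ⊆ s → t.card ≤ c) : s.encard ≤ c := by
  rcases s.finite_or_infinite with hs | hs
  · rw [hs.encard_eq_coe_toFinset_card]
    exact_mod_cast h _ hs.coe_toFinset.subset
  · obtain ⟨t, hts, htc⟩ := hs.exists_subset_card_eq (c + 1)
    have := h t hts
    omega

section BoundedOverlap

variable {ι α : Type*} {P : ι → Set α} {n : ℕ}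

open Classical in
lemma card_filter_mem_le_of_bounded_overlap
    (hn : ∀ i, {i' | (P i ∩ P i').Nonempty}.encard ≤ n) (s : Finset ι) (x : α) :
    (s.filter (fun i => x ∈ P i)).card ≤ n := by
  rcases (s.filter (fun i => x ∈ P i)).eq_empty_or_nonempty with h | ⟨i₀, hi₀⟩
  · simp [h]
  · have hsub : (↑(s.filter (fun i => x ∈ P i)) : Set ι) ⊆ {i' | (P i₀ ∩ P i').Nonempty} :=
      fun i hi => ⟨x, (Finset.mem_filter.1 hi₀).2, (Finset.mem_filter.1 hi).2⟩
    have := (Set.encard_mono hsub).trans (hn i₀)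
    rw [Set.encard_coe_eq_coe_finsetCard] at this
    exact_mod_cast this

lemma card_mul_le_measure_of_bounded_overlap [MeasurableSpace α] (μ : Measure α)
    (hP : ∀ i, MeasurableSet (P i)) (hn : ∀ i, {i' | (P i ∩ P i').Nonempty}.encard ≤ n)
    {s : Finset ι} {B : Set α} (hB : MeasurableSet B) {m : ℝ≥0∞}
    (hsub : ∀ i ∈ s, P i ⊆ B) (hm : ∀ i ∈ s, m ≤ μ (P i)) : s.card * m ≤ n * μ B := by
  classical
  have hpt : ∀ x, ∑ i ∈ s, (P i).indicator 1 x ≤ B.indicator (fun _ => (n : ℝ≥0∞)) x := by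
    intro x
    by_cases hx : x ∈ B
    · simp only [Set.indicator_apply, Pi.one_apply, Finset.sum_boole, if_pos hx]
      exact_mod_cast card_filter_mem_le_of_bounded_overlap hn s x
    · rw [Set.indicator_of_notMem hx]
      exact (Finset.sum_eq_zero fun i hi =>
        Set.indicator_of_notMem (fun h => hx (hsub i hi h)) _).le
  calc s.card * m = ∑ i ∈ s, m := by simp
    _ ≤ ∑ i ∈ s, μ (P i) := Finset.sum_le_sum hm
    _ = ∫⁻ x, ∑ i ∈ s, (P i).indicator 1 x ∂μ := by
      rw [lintegral_finsetSum _ fun i _ => measurable_one.indicator (hP i)]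
      simp only [lintegral_indicator_one (hP _)]
    _ ≤ ∫⁻ x, B.indicator (fun _ => (n : ℝ≥0∞)) x ∂μ := lintegral_mono hpt
    _ = n * μ B := lintegral_indicator_const hB _

end BoundedOverlap

section Euclidean

variable {d : ℕ}

noncomputable def unitBallVolume (d : ℕ) : ℝ :=
  (volume (closedBall (0 : EuclideanSpace ℝ (Fin d)) 1)).toReal

lemma unitBallVolume_pos (d : ℕ) : 0 < unitBallVolume d :=
  ENNReal.toReal_pos (measure_closedBall_pos _ _ one_pos).ne' measure_closedBall_lt_top.ne

lemma volume_closedBall_eq (a : EuclideanSpace ℝ (Fin d)) {r : ℝ} (hr : 0 ≤ r) :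
    volume (closedBall a r) = ENNReal.ofReal (r ^ d * unitBallVolume d) := by
  rw [Measure.addHaar_closedBall' volume a hr, finrank_euclideanSpace_fin, unitBallVolume,
    ENNReal.ofReal_mul (by positivity), ENNReal.ofReal_toReal measure_closedBall_lt_top.ne]

lemma radius_le_of_closedBall_subset (hd : d ≠ 0) {S : Set (EuclideanSpace ℝ (Fin d))}
    {a : EuclideanSpace ℝ (Fin d)} {ρ V : ℝ} (hρ : 0 ≤ ρ) (hsub : closedBall a ρ ⊆ S)
    (hS : volume S ≠ ∞) (hV : (volume S).toReal ≤ V) :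
    ρ ≤ (V / unitBallVolume d) ^ ((d : ℝ)⁻¹) := by
  have hball : ρ ^ d * unitBallVolume d ≤ V := by
    refine le_trans ?_ hV
    rw [← ENNReal.toReal_ofReal (mul_nonneg (pow_nonneg hρ d) (unitBallVolume_pos d).le),
      ← volume_closedBall_eq a hρ]
    exact ENNReal.toReal_mono hS (measure_mono hsub)
  calc ρ = (ρ ^ d) ^ ((d : ℝ)⁻¹) := (Real.pow_rpow_inv_natCast hρ hd).symm
    _ ≤ (V / unitBallVolume d) ^ ((d : ℝ)⁻¹) := by
      gcongr
      rwa [le_div_iff₀ (unitBallVolume_pos d)]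

lemma card_le_of_subset_closedBall {ι : Type*} {P : ι → Set (EuclideanSpace ℝ (Fin d))} {n : ℕ}
    (hP : ∀ i, MeasurableSet (P i)) (hn : ∀ i, {i' | (P i ∩ P i').Nonempty}.encard ≤ n)
    {s : Finset ι} {z : EuclideanSpace ℝ (Fin d)} {A t V : ℝ} (hA : 0 ≤ A) (ht : 0 < t)
    (hV : 0 < V) (hsub : ∀ i ∈ s, P i ⊆ closedBall z (A * t))
    (hvol : ∀ i ∈ s, t ^ d ≤ V * (volume (P i)).toReal) :
    (s.card : ℝ) ≤ n * A ^ d * unitBallVolume d * V := by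
  have hm : ∀ i ∈ s, ENNReal.ofReal (t ^ d / V) ≤ volume (P i) := fun i hi =>
    ENNReal.ofReal_le_of_le_toReal ((div_le_iff₀' hV).2 (hvol i hi))
  have hc := unitBallVolume_pos d
  have key := card_mul_le_measure_of_bounded_overlap volume hP hn measurableSet_closedBall hsub hm
  rw [volume_closedBall_eq z (by positivity), ← ENNReal.ofReal_natCast,
    ← ENNReal.ofReal_natCast, ← ENNReal.ofReal_mul (by positivity),
    ← ENNReal.ofReal_mul (by positivity),
    ENNReal.ofReal_le_ofReal_iff (mul_nonneg n.cast_nonneg (by positivity))] at key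
  have htd : 0 < t ^ d / V := by positivity
  rw [← mul_le_mul_iff_of_pos_right htd]
  calc (s.card : ℝ) * (t ^ d / V) ≤ n * ((A * t) ^ d * unitBallVolume d) := key
    _ = n * A ^ d * unitBallVolume d * V * (t ^ d / V) := by field_simp; ring

end Euclidean

def IsRoundWith {X : Type*} [PseudoMetricSpace X] (K : ℝ) (S : Set X) : Prop :=
  ∃ (a b : X) (ρ R : ℝ), 0 < ρ ∧ closedBall a ρ ⊆ S ∧ S ⊆ closedBall b R ∧ R ≤ K * ρ

section Cells

variable {d : ℕ} {S T : Set (EuclideanSpace ℝ (Fin d))}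

lemma IsRoundWith.subset_closedBall {K κ α : ℝ} (hS : IsRoundWith K S) (hK : 0 ≤ K) (hκ : 0 ≤ κ)
    {y : EuclideanSpace ℝ (Fin d)} (hy : y ∈ S)
    (hV : (volume S).toReal ≤ κ * jb y ^ (α * d)) :
    S ⊆ closedBall y (2 * K * (κ / unitBallVolume d) ^ ((d : ℝ)⁻¹) * jb y ^ α) := by
  obtain ⟨a, b, ρ, R, hρ, hinner, houter, hR⟩ := hS
  have hc := unitBallVolume_pos d
  have hjb := jb_pos y
  intro x hx
  rw [mem_closedBall]
  rcases eq_or_ne d 0 with rfl | hd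
  · rw [Subsingleton.elim x y, dist_self]
    positivity
  have hρM : ρ ≤ (κ / unitBallVolume d) ^ ((d : ℝ)⁻¹) * jb y ^ α := by
    refine (radius_le_of_closedBall_subset hd hρ.le hinner
      (measure_ne_top_of_subset houter measure_closedBall_lt_top.ne) hV).trans_eq ?_
    rw [mul_div_right_comm, Real.mul_rpow (by positivity) (by positivity), ← Real.rpow_mul hjb.le,
      mul_inv_cancel_right₀ (Nat.cast_ne_zero.2 hd)]
  calc dist x y ≤ dist x b + dist y b := dist_triangle_right x y b
    _ ≤ 2 * (K * ρ) := by linarith [mem_closedBall.1 (houter hx), mem_closedBall.1 (houter hy)]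
    _ ≤ _ := by
      rw [mul_assoc 2 K, mul_assoc 2 (K * _), mul_assoc K]
      gcongr

lemma subset_closedBall_of_inter_nonempty {z : EuclideanSpace ℝ (Fin d)} {L α β : ℝ} (hL : 0 ≤ L)
    (hβ₀ : 0 ≤ β) (hαβ : α ≤ β) (hβ₁ : β ≤ 1)
    (hS : ∀ x ∈ S, S ⊆ closedBall x (L * jb x ^ α)) (hT : ∀ x ∈ T, T ⊆ closedBall x (L * jb x ^ β))
    (hz : z ∈ S) (hST : (S ∩ T).Nonempty) : T ⊆ closedBall z (L * (2 + L) * jb z ^ β) := by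
  obtain ⟨x, hxS, hxT⟩ := hST
  have hxz : jb x ^ β ≤ (1 + L) * jb z ^ β :=
    Real.rpow_le_mul_rpow_of_le_mul (jb_pos x).le (jb_pos z).le (by linarith) hβ₀ hβ₁
      (jb_le_of_dist_le hL (hαβ.trans hβ₁) (hS z hz hxS))
  have hzα : jb z ^ α ≤ jb z ^ β := Real.rpow_le_rpow_of_exponent_le (one_le_jb z) hαβ
  intro y hy
  rw [mem_closedBall]
  calc dist y z ≤ dist y x + dist x z := dist_triangle y x z
    _ ≤ L * jb x ^ β + L * jb z ^ α := add_le_add (hT x hxT hy) (hS z hz hxS)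
    _ ≤ L * ((1 + L) * jb z ^ β) + L * jb z ^ β := by gcongr
    _ = L * (2 + L) * jb z ^ β := by ring

lemma jb_le_of_inter_nonempty {x y : EuclideanSpace ℝ (Fin d)} {L α β : ℝ} (hL : 0 ≤ L)
    (hα : α ≤ 1) (hβ : β ≤ 1)
    (hS : ∀ z ∈ S, S ⊆ closedBall z (L * jb z ^ α)) (hT : ∀ z ∈ T, T ⊆ closedBall z (L * jb z ^ β))
    (hx : x ∈ S) (hy : y ∈ T) (hST : (S ∩ T).Nonempty) : jb x ≤ (1 + L) ^ 2 * jb y := by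
  obtain ⟨z, hzS, hzT⟩ := hST
  calc jb x ≤ (1 + L) * jb z := jb_le_of_dist_le hL hα (hS z hzS hx)
    _ ≤ (1 + L) * ((1 + L) * jb y) := by
      gcongr
      exact jb_le_of_dist_le hL hβ (hT y hy hzT)
    _ = (1 + L) ^ 2 * jb y := by ring

end Cells

theorem stmt10_general {d n₀ : ℕ} {J I : Type*}
    (α₁ α₂ κ K : ℝ) (h1 : 0 ≤ α₁) (h2 : α₁ ≤ α₂) (h3 : α₂ ≤ 1) (hκ : 1 ≤ κ) (hK : 1 ≤ K)
    (Q : J → Set (EuclideanSpace ℝ (Fin d))) (P : I → Set (EuclideanSpace ℝ (Fin d)))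
    (η : J → EuclideanSpace ℝ (Fin d)) (ξ : I → EuclideanSpace ℝ (Fin d))
    (hPm : ∀ i, MeasurableSet (P i))
    (hPadm : ∀ i, {i' | (P i ∩ P i').Nonempty}.encard ≤ n₀)
    (hQμ : ∀ j, ∀ x ∈ Q j, κ⁻¹ * jb x ^ (α₁ * d) ≤ (volume (Q j)).toReal ∧
        (volume (Q j)).toReal ≤ κ * jb x ^ (α₁ * d))
    (hPμ : ∀ i, ∀ x ∈ P i, κ⁻¹ * jb x ^ (α₂ * d) ≤ (volume (P i)).toReal ∧
        (volume (P i)).toReal ≤ κ * jb x ^ (α₂ * d))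
    (hQball : ∀ j, ∃ (a b : EuclideanSpace ℝ (Fin d)) (ρ R : ℝ), 0 < ρ ∧
        Metric.closedBall a ρ ⊆ Q j ∧ Q j ⊆ Metric.closedBall b R ∧ R ≤ K * ρ)
    (hPball : ∀ i, ∃ (a b : EuclideanSpace ℝ (Fin d)) (ρ R : ℝ), 0 < ρ ∧
        Metric.closedBall a ρ ⊆ P i ∧ P i ⊆ Metric.closedBall b R ∧ R ≤ K * ρ)
    (hη : ∀ j, η j ∈ Q j) (hξ : ∀ i, ξ i ∈ P i) :
    (∃ c : ℕ, ∀ j, {i | (Q j ∩ P i).Nonempty}.encard ≤ c) ∧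
    (∃ C : ℝ, 1 ≤ C ∧ ∀ j i, (Q j ∩ P i).Nonempty →
        C⁻¹ * jb (η j) ≤ jb (ξ i) ∧ jb (ξ i) ≤ C * jb (η j)) := by
  have hc := unitBallVolume_pos d
  set L := 2 * K * (κ / unitBallVolume d) ^ ((d : ℝ)⁻¹)
  have hL : 0 ≤ L := by positivity
  have hα₂ : 0 ≤ α₂ := h1.trans h2
  have hQ : ∀ j, ∀ x ∈ Q j, Q j ⊆ closedBall x (L * jb x ^ α₁) := fun j x hx =>
    IsRoundWith.subset_closedBall (hQball j) (by linarith) (by linarith) hx (hQμ j x hx).2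
  have hP : ∀ i, ∀ x ∈ P i, P i ⊆ closedBall x (L * jb x ^ α₂) := fun i x hx =>
    IsRoundWith.subset_closedBall (hPball i) (by linarith) (by linarith) hx (hPμ i x hx).2
  have hηξ : ∀ j i, (Q j ∩ P i).Nonempty → jb (η j) ≤ (1 + L) ^ 2 * jb (ξ i) := fun j i =>
    jb_le_of_inter_nonempty hL (h2.trans h3) h3 (hQ j) (hP i) (hη j) (hξ i)
  have hξη : ∀ j i, (Q j ∩ P i).Nonempty → jb (ξ i) ≤ (1 + L) ^ 2 * jb (η j) := fun j i hji =>
    jb_le_of_inter_nonempty hL h3 (h2.trans h3) (hP i) (hQ j) (hξ i) (hη j)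
      (Set.inter_comm (Q j) (P i) ▸ hji)
  refine ⟨⟨⌈n₀ * (L * (2 + L)) ^ d * unitBallVolume d * (κ * ((1 + L) ^ 2) ^ (α₂ * d))⌉₊,
    fun j => Set.encard_le_of_forall_finset_card_le fun s hs => ?_⟩,
    ⟨(1 + L) ^ 2, one_le_pow₀ (by linarith), fun j i hji =>
      ⟨(inv_mul_le_iff₀ (by positivity)).2 (hηξ j i hji), hξη j i hji⟩⟩⟩
  refine Nat.cast_le.1 ((card_le_of_subset_closedBall hPm hPadm (z := η j) (by positivity)
    (Real.rpow_pos_of_pos (jb_pos (η j)) α₂) (by positivity) (fun i hi => ?_) fun i hi => ?_).trans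
    (Nat.le_ceil _))
  · exact subset_closedBall_of_inter_nonempty hL hα₂ h2 h3 (hQ j) (hP i) (hη j) (hs hi)
  · rw [← Real.rpow_natCast, ← Real.rpow_mul (jb_pos _).le]
    exact Real.rpow_le_mul_of_inv_mul_rpow_le (jb_pos _).le (jb_pos _).le (by positivity)
      (by positivity) (by positivity) (hηξ j i (hs hi)) (hPμ i (ξ i) (hξ i)).1

/-- If {Q_j} is an α₁-covering and {P_i} an α₂-covering (0 ≤ α₁ ≤ α₂ ≤ 1), with
points η_j ∈ Q_j, ξ_i ∈ P_i, then |Λ_j| = |{i : Q_j ∩ P_i ≠ ∅}| ≤ c uniformly, and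
⟨ξ_i⟩ ≍ ⟨η_j⟩ whenever Q_j ∩ P_i ≠ ∅. -/
theorem stmt10 {d n₀ : ℕ} {J I : Type*} [Countable J] [Countable I]
    (α₁ α₂ κ K : ℝ) (h1 : 0 ≤ α₁) (h2 : α₁ ≤ α₂) (h3 : α₂ ≤ 1) (hκ : 1 ≤ κ) (hK : 1 ≤ K)
    (Q : J → Set (EuclideanSpace ℝ (Fin d))) (P : I → Set (EuclideanSpace ℝ (Fin d)))
    (η : J → EuclideanSpace ℝ (Fin d)) (ξ : I → EuclideanSpace ℝ (Fin d))
    (hQm : ∀ j, MeasurableSet (Q j)) (hPm : ∀ i, MeasurableSet (P i))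
    (hQcov : ⋃ j, Q j = Set.univ) (hPcov : ⋃ i, P i = Set.univ)
    (hQadm : ∀ j, {j' | (Q j ∩ Q j').Nonempty}.encard ≤ n₀)
    (hPadm : ∀ i, {i' | (P i ∩ P i').Nonempty}.encard ≤ n₀)
    (hQμ : ∀ j, ∀ x ∈ Q j, κ⁻¹ * jb x ^ (α₁ * d) ≤ (volume (Q j)).toReal ∧
        (volume (Q j)).toReal ≤ κ * jb x ^ (α₁ * d))
    (hPμ : ∀ i, ∀ x ∈ P i, κ⁻¹ * jb x ^ (α₂ * d) ≤ (volume (P i)).toReal ∧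
        (volume (P i)).toReal ≤ κ * jb x ^ (α₂ * d))
    (hQball : ∀ j, ∃ (a b : EuclideanSpace ℝ (Fin d)) (ρ R : ℝ), 0 < ρ ∧
        Metric.closedBall a ρ ⊆ Q j ∧ Q j ⊆ Metric.closedBall b R ∧ R ≤ K * ρ)
    (hPball : ∀ i, ∃ (a b : EuclideanSpace ℝ (Fin d)) (ρ R : ℝ), 0 < ρ ∧
        Metric.closedBall a ρ ⊆ P i ∧ P i ⊆ Metric.closedBall b R ∧ R ≤ K * ρ)
    (hη : ∀ j, η j ∈ Q j) (hξ : ∀ i, ξ i ∈ P i) :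
    (∃ c : ℕ, ∀ j, {i | (Q j ∩ P i).Nonempty}.encard ≤ c) ∧
    (∃ C : ℝ, 1 ≤ C ∧ ∀ j i, (Q j ∩ P i).Nonempty →
        C⁻¹ * jb (η j) ≤ jb (ξ i) ∧ jb (ξ i) ≤ C * jb (η j)) :=
  stmt10_general α₁ α₂ κ K h1 h2 h3 hκ hK Q P η ξ hPm hPadm hQμ hPμ hQball hPball hη hξ
end
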